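/- Dual relation for the second spectrum point: P_m(bq^{n+1}; a, b; q) = (q^{-m}/a; q)_m^{-1} · M_n(q^{-m}; b, -a/b; q) for all nonnegative integers m, n, where 0 < q < 1, 0 < a < q^{-1}, b < 0. -/

import Mathlib

noncomputable def qPoch (a q : ℝ) (n : ℕ) : ℝ := ∏ j ∈ Finset.range n, (1 - a * q ^ j)
open Finset


lemma qPoch_zero (x q : ℝ) : qPoch x q 0 = 1 := by simp [qPoch]

lemma qPoch_succ (x q : ℝ) (n : ℕ) : qPoch x q (n+1) = qPoch x q n * (1 - x * q^n) :=
  Finset.prod_range_succ _ _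

lemma qPoch_succ_left (x q : ℝ) (n : ℕ) : qPoch x q (n+1) = (1 - x) * qPoch (x*q) q n := by
  rw [qPoch, Finset.prod_range_succ', qPoch]
  rw [mul_comm]
  congr 1
  · simp
  · exact Finset.prod_congr rfl fun i _ => by ring

lemma qPoch_add (x q : ℝ) (i j : ℕ) : qPoch x q (i + j) = qPoch x q i * qPoch (x * q^i) q j := by
  rw [qPoch, qPoch, qPoch, Finset.prod_range_add]
  congr 1
  exact Finset.prod_congr rfl fun k _ => by rw [pow_add]; ring

lemma qPoch_split (x q : ℝ) {k m : ℕ} (h : k ≤ m) :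
    qPoch x q m = qPoch x q k * qPoch (x * q^k) q (m - k) := by
  obtain ⟨d, rfl⟩ := Nat.exists_eq_add_of_le h
  rw [Nat.add_sub_cancel_left, qPoch_add]

lemma qPoch_pos {x q : ℝ} (hq0 : 0 < q) (hq1 : q < 1) (hx : x < 1) (n : ℕ) :
    0 < qPoch x q n := by
  refine Finset.prod_pos fun j _ => ?_
  nlinarith [mul_pos (show (0:ℝ) < 1 - x by linarith) (pow_pos hq0 j),
    pow_le_one₀ hq0.le hq1.le (n := j)]



noncomputable def G (q : ℝ) : ℕ → ℕ → ℝ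
  | 0, 0 => 1
  | 0, _+1 => 0
  | _+1, 0 => 1
  | k+1, j+1 => G q k j + q^(j+1) * G q k (j+1)

lemma G_zero (q : ℝ) : ∀ k j, k < j → G q k j = 0 := by
  intro k
  induction k with
  | zero => intro j hj; match j, hj with | j+1, _ => rfl
  | succ k ih =>
    intro j hj
    match j, hj with
    | j+1, hj =>
      show G q k j + q^(j+1) * G q k (j+1) = 0
      rw [ih j (by omega), ih (j+1) (by omega)]; ring

lemma G_diag (q : ℝ) : ∀ k, G q k k = 1 := by
  intro k
  induction k with
  | zero => rfl
  | succ k ih =>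
    show G q k k + q^(k+1) * G q k (k+1) = 1
    rw [ih, G_zero q k (k+1) (by omega)]; ring

lemma G_mul (q : ℝ) : ∀ k j i, k = j + i → G q k j * (qPoch q q j * qPoch q q i) = qPoch q q k := by
  intro k
  induction k with
  | zero =>
    intro j i h
    obtain ⟨rfl, rfl⟩ : j = 0 ∧ i = 0 := by omega
    simp [G, qPoch]
  | succ k ih =>
    intro j i h
    match j, i, h with
    | 0, i, h =>
      obtain rfl : i = k + 1 := by omega
      show G q (k+1) 0 * (qPoch q q 0 * qPoch q q (k+1)) = qPoch q q (k+1)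
      show (1:ℝ) * (qPoch q q 0 * qPoch q q (k+1)) = qPoch q q (k+1)
      simp [qPoch]
    | j+1, 0, h =>
      obtain rfl : j = k := by omega
      rw [G_diag]; simp [qPoch]
    | j+1, i+1, h =>
      obtain rfl : k = j + 1 + i := by omega
      have ih1 := ih j (i+1) (by omega)
      have ih2 := ih (j+1) i rfl
      show (G q (j+1+i) j + q^(j+1) * G q (j+1+i) (j+1)) *
          (qPoch q q (j+1) * qPoch q q (i+1)) = qPoch q q (j+1+i+1)
      rw [show j+1+i+1 = (j+1+i)+1 from rfl, qPoch_succ q q (j+1+i),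
        qPoch_succ q q j, qPoch_succ q q i] at *
      linear_combination (1 - q*q^j) * ih1 + q^(j+1)*(1 - q*q^i) * ih2

lemma keyK (q t : ℝ) : ∀ (k : ℕ) (c : ℝ),
    qPoch (c * t) q k = ∑ j ∈ Finset.range (k+1),
      G q k j * (∏ i ∈ Finset.range j, (-(c * q^i))) * qPoch (c * q^j) q (k-j) *
        ∏ i ∈ Finset.range j, (t - q^i) := by
  intro k
  induction k with
  | zero => intro c; simp [qPoch, G]
  | succ k ih =>
    intro c
    set h : ℕ → ℝ := fun j =>
      (∏ i ∈ Finset.range j, (-(c * q^i))) * qPoch (c * q^j) q (k+1-j) *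
        ∏ i ∈ Finset.range j, (t - q^i) with hh
    have hstep : ∀ j, G q (k+1) (j+1) = G q k j + q^(j+1) * G q k (j+1) := fun j => rfl
    calc qPoch (c*t) q (k+1)
        = (1 - c*t) * qPoch (c*t*q) q k := qPoch_succ_left _ _ _
      _ = (1 - c*t) * qPoch ((c*q)*t) q k := by ring_nf
      _ = (1 - c*t) * ∑ j ∈ Finset.range (k+1),
            G q k j * (∏ i ∈ Finset.range j, (-((c*q) * q^i))) * qPoch ((c*q) * q^j) q (k-j) *
            ∏ i ∈ Finset.range j, (t - q^i) := by rw [ih (c*q)]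
      _ = ∑ j ∈ Finset.range (k+1), (q^j * (G q k j * h j) + G q k j * h (j+1)) := by
          rw [Finset.mul_sum]
          refine Finset.sum_congr rfl fun j hj => ?_
          have hjk : j ≤ k := by simpa using Nat.lt_succ_iff.mp (Finset.mem_range.mp hj)
          obtain ⟨d, rfl⟩ := Nat.exists_eq_add_of_le hjk
          have e1 : j + d + 1 - j = d + 1 := by omega
          have e2 : j + d - j = d := by omega
          have e3 : j + d + 1 - (j+1) = d := by omega
          simp only [hh, e1, e2, e3]
          rw [qPoch_succ_left (c * q^j) q d,
            Finset.prod_range_succ (fun i => -(c*q^i)) j,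
            Finset.prod_range_succ (fun i => (t - q^i)) j,
            show c * q^(j+1) = c * q^j * q by ring]
          have : ∀ i, -((c*q) * q^i) = (-(c*q^i)) * q := fun i => by ring
          rw [Finset.prod_congr rfl fun i _ => this i, Finset.prod_mul_distrib,
            Finset.prod_const]
          simp only [Finset.card_range]
          set A := ∏ x ∈ Finset.range j, -(c*q^x) with hA
          set B := ∏ i ∈ Finset.range j, (t - q^i) with hB
          set R := qPoch (c*q*q^j) q d with hR
          ring_nf
          rw [hR]; ring
      _ = ∑ j ∈ Finset.range (k+1), q^j * (G q k j * h j)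
          + ∑ j ∈ Finset.range (k+1), G q k j * h (j+1) := Finset.sum_add_distrib
      _ = ∑ j ∈ Finset.range (k+2), G q (k+1) j * h j := by
          have hG0 : ∀ k', G q k' 0 = (1:ℝ) := by intro k'; cases k' <;> rfl
          rw [Finset.sum_range_succ' (fun j => G q (k+1) j * h j) (k+1)]
          simp only [hstep, add_mul, Finset.sum_add_distrib, hG0, one_mul]
          rw [Finset.sum_range_succ (fun j => q^(j+1) * G q k (j+1) * h (j+1)) k,
            G_zero q k (k+1) (by omega),
            Finset.sum_range_succ' (fun j => q^j * (G q k j * h j)) k]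
          simp only [hG0, pow_zero, one_mul, mul_zero, zero_mul, add_zero]
          have hx : ∀ j, q^(j+1) * G q k (j+1) * h (j+1) = q^(j+1) * (G q k (j+1) * h (j+1)) :=
            fun j => by ring
          simp only [hx]
          ring
      _ = ∑ j ∈ Finset.range (k+1+1),
            G q (k+1) j * (∏ i ∈ Finset.range j, (-(c * q^i))) * qPoch (c * q^j) q (k+1-j) *
              ∏ i ∈ Finset.range j, (t - q^i) :=
          Finset.sum_congr rfl fun j _ => by rw [hh]; ring

lemma L2pp (q : ℝ) : ∀ (M : ℕ) (A : ℝ),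
    ∑ i ∈ Finset.range (M+1),
      (-1:ℝ)^i * (∏ l ∈ Finset.range (M-i), q^l) * G q M i * qPoch (A*q^(i+1)) q (M-i)
    = ∏ i ∈ Finset.range M, (-(A*q^(i+1)) * q^i) := by
  intro M
  induction M with
  | zero => intro A; simp [qPoch, G]
  | succ M ih =>
    intro A
    have hG0 : ∀ k', G q k' 0 = (1:ℝ) := by intro k'; cases k' <;> rfl
    set f : ℕ → ℝ := fun i =>
      (-1:ℝ)^i * (∏ l ∈ Finset.range (M+1-i), q^l) * qPoch (A*q^(i+1)) q (M+1-i) with hf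
    set T : ℕ → ℝ := fun i =>
      (-1:ℝ)^i * (∏ l ∈ Finset.range (M+1-i), q^l) * G q (M+1) i * qPoch (A*q^(i+1)) q (M+1-i)
      with hT
    set g1 : ℕ → ℝ := fun i => G q M i * f (i+1) with hg1
    set g2 : ℕ → ℝ := fun i => q^(i+1) * G q M (i+1) * f (i+1) with hg2
    have split : ∀ i, T (i+1) = g1 i + g2 i := by
      intro i
      simp only [hT, hg1, hg2, hf]
      rw [show G q (M+1) (i+1) = G q M i + q^(i+1) * G q M (i+1) from rfl]
      ring
    have key : ∑ i ∈ Finset.range (M+2), T i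
        = ∑ i ∈ Finset.range (M+1), g1 i + ∑ i ∈ Finset.range (M+1), (q^i * G q M i * f i) := by
      rw [Finset.sum_range_succ' T (M+1)]
      simp only [split]
      rw [Finset.sum_add_distrib, Finset.sum_range_succ'
        (fun i => q^i * G q M i * f i) M, Finset.sum_range_succ g2 M]
      have hg2M : g2 M = 0 := by
        simp only [hg2]; rw [G_zero q M (M+1) (by omega)]; ring
      have hT0 : T 0 = q^0 * G q M 0 * f 0 := by
        simp only [hT, hf, hG0]; ring
      rw [hg2M, hT0]
      simp only [hg2]
      ring
    have e1 : ∑ i ∈ Finset.range (M+1), (q^i * G q M i * f i)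
        = q^M * (1 - A*q^(M+1)) * ∏ i ∈ Finset.range M, (-(A*q^(i+1)) * q^i) := by
      rw [← ih A, Finset.mul_sum]
      refine Finset.sum_congr rfl fun i hi => ?_
      have him : i ≤ M := by simpa using Nat.lt_succ_iff.mp (Finset.mem_range.mp hi)
      simp only [hf]
      have e : M + 1 - i = (M - i) + 1 := by omega
      rw [e, qPoch_succ (A*q^(i+1)) q (M-i), Finset.prod_range_succ (fun l => q^l) (M-i)]
      have e2 : A * q^(i+1) * q^(M-i) = A * q^(M+1) := by
        rw [mul_assoc, ← pow_add, show i+1+(M-i) = M+1 by omega]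
      have e3 : (q^i * q^(M-i) : ℝ) = q^M := by
        rw [← pow_add, show i+(M-i) = M by omega]
      calc q^i * G q M i * ((-1:ℝ)^i * ((∏ l ∈ Finset.range (M-i), q^l) * q^(M-i)) *
              (qPoch (A*q^(i+1)) q (M-i) * (1 - A * q^(i+1) * q^(M-i))))
          = (q^i * q^(M-i)) * (1 - A * q^(i+1) * q^(M-i)) *
              ((-1:ℝ)^i * (∏ l ∈ Finset.range (M-i), q^l) * G q M i * qPoch (A*q^(i+1)) q (M-i)) := by
            ring
        _ = q^M * (1 - A*q^(M+1)) *
              ((-1:ℝ)^i * (∏ l ∈ Finset.range (M-i), q^l) * G q M i * qPoch (A*q^(i+1)) q (M-i)) := by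
            rw [e2, e3]
    have e2 : ∑ i ∈ Finset.range (M+1), g1 i
        = - (q^M * ∏ i ∈ Finset.range M, (-(A*q^(i+1)) * q^i)) := by
      have hAq := ih (A*q)
      have hterm : ∀ i, g1 i
          = -((-1:ℝ)^i * (∏ l ∈ Finset.range (M-i), q^l) * G q M i * qPoch ((A*q)*q^(i+1)) q (M-i)) := by
        intro i
        simp only [hg1, hf]
        have e : M + 1 - (i+1) = M - i := by omega
        rw [e, show A * q^(i+1+1) = (A*q) * q^(i+1) by ring]
        ring
      simp only [hterm]
      rw [Finset.sum_neg_distrib, hAq]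
      have hfac : ∀ i, -((A*q)*q^(i+1)) * q^i = (-(A*q^(i+1)) * q^i) * q := fun i => by ring
      rw [Finset.prod_congr rfl fun i (_ : i ∈ Finset.range M) => hfac i, Finset.prod_mul_distrib,
        Finset.prod_const, Finset.card_range]
      ring
    show ∑ i ∈ Finset.range (M+2), T i = _
    rw [key, e1, e2, Finset.prod_range_succ (fun i => -(A*q^(i+1)) * q^i) M]
    ring

lemma C1 (q : ℝ) (hq0 : 0 < q) (hq1 : q < 1) (M : ℕ) : ∀ i, i ≤ M →
    qPoch (q^(-(M:ℤ))) q i * q^i * (∏ l ∈ Finset.range M, q^l) * qPoch q q (M-i)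
    = (-1:ℝ)^i * (∏ l ∈ Finset.range (M-i), q^l) * qPoch q q M := by
  intro i
  induction i with
  | zero => intro _; simp [qPoch]
  | succ i ih =>
    intro hi1
    have hi : i ≤ M := by omega
    have IH := ih hi
    set X := q^(-(M:ℤ)) with hX
    set d := M - (i+1) with hd
    have e1 : M - i = d + 1 := by omega
    have hcan : (1 - q^(d+1)) ≠ 0 := by
      have : q^(d+1) < 1 := pow_lt_one₀ hq0.le hq1 (by omega)
      linarith
    apply mul_right_cancel₀ hcan
    rw [e1] at IH
    rw [qPoch_succ X q i]
    have F2 : qPoch q q (d+1) = qPoch q q d * (1 - q^(d+1)) := by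
      rw [qPoch_succ q q d, ← pow_succ']
    have F4 : X * q^i * (q^d * q) = 1 := by
      have h1 : q^i * (q^d * q) = q^M := by
        rw [← pow_succ, ← pow_add, show i+(d+1) = M by omega]
      rw [mul_assoc, h1, hX, zpow_neg, zpow_natCast]
      exact inv_mul_cancel₀ (pow_ne_zero _ hq0.ne')
    have F3 : (∏ l ∈ Finset.range (d+1), q^l) = (∏ l ∈ Finset.range d, q^l) * q^d :=
      Finset.prod_range_succ _ _
    rw [F2] at IH
    rw [F3] at IH
    linear_combination (q*(1 - X*q^i)) * IH - ((-1:ℝ)^i * (∏ l ∈ Finset.range d, q^l) * qPoch q q M) * F4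

lemma L2p (q a : ℝ) (hq0 : 0 < q) (hq1 : q < 1) (M : ℕ) (A : ℝ) :
    ∑ i ∈ Finset.range (M+1),
      qPoch (q^(-(M:ℤ))) q i * q^i * qPoch (A*q^(i+1)) q (M-i) / qPoch q q i
    = ∏ i ∈ Finset.range M, (-(A*q^(i+1))) := by
  have hqq : ∀ r, qPoch q q r ≠ 0 := fun r => (qPoch_pos hq0 hq1 hq1 r).ne'
  have hQM : (∏ l ∈ Finset.range M, q^l) ≠ 0 :=
    Finset.prod_ne_zero_iff.mpr fun l _ => pow_ne_zero _ hq0.ne'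
  have step : ∀ i ∈ Finset.range (M+1),
      qPoch (q^(-(M:ℤ))) q i * q^i * qPoch (A*q^(i+1)) q (M-i) / qPoch q q i
      = ((-1:ℝ)^i * (∏ l ∈ Finset.range (M-i), q^l) * G q M i * qPoch (A*q^(i+1)) q (M-i))
          / (∏ l ∈ Finset.range M, q^l) := by
    intro i hi
    have him : i ≤ M := by simpa using Nat.lt_succ_iff.mp (Finset.mem_range.mp hi)
    rw [div_eq_div_iff (hqq i) hQM]
    apply mul_right_cancel₀ (hqq (M-i))
    have hC := C1 q hq0 hq1 M i him
    have hGm := G_mul q M i (M-i) (by omega)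
    linear_combination (qPoch (A*q^(i+1)) q (M-i)) * hC
      - ((-1:ℝ)^i * (∏ l ∈ Finset.range (M-i), q^l) * qPoch (A*q^(i+1)) q (M-i)) * hGm
  rw [Finset.sum_congr rfl step, ← Finset.sum_div, L2pp q M A, Finset.prod_mul_distrib]
  exact mul_div_cancel_right₀ _ hQM

lemma C2 (q : ℝ) (hq : q ≠ 0) (n k : ℕ) :
    qPoch (q^(-(n:ℤ))) q k * (q^n)^k = ∏ i ∈ Finset.range k, (q^n - q^i) := by
  have hz : q^(-(n:ℤ)) * q^n = 1 := by
    rw [zpow_neg, zpow_natCast]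
    exact inv_mul_cancel₀ (pow_ne_zero _ hq)
  rw [qPoch, show ((q^n)^k : ℝ) = ∏ _i ∈ Finset.range k, q^n by
      rw [Finset.prod_const, Finset.card_range], ← Finset.prod_mul_distrib]
  refine Finset.prod_congr rfl fun i _ => ?_
  linear_combination (-(q^i)) * hz

lemma PJ (q a b : ℝ) {j m : ℕ} (hj : j ≤ m) :
    a^j * (∏ i ∈ Finset.range j, -(b*q*q^i)) * (∏ i ∈ Finset.range (m-j), -(a*q^j*q^(i+1)))
    = b^j * ∏ i ∈ Finset.range m, (-(a*q^(i+1))) := by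
  obtain ⟨d, rfl⟩ := Nat.exists_eq_add_of_le hj
  have e : j + d - j = d := by omega
  rw [e, show j + d = d + j by omega, Finset.prod_range_add (fun i => -(a*q^(i+1))) d j]
  have h1 : ∀ i : ℕ, -(a*q^j*q^(i+1)) = -(a*q^(i+1)) * q^j := fun i => by ring
  have h2 : ∀ i : ℕ, -(a*q^(d+i+1)) = -(a*q^(i+1)) * q^d := fun i => by
    rw [show d+i+1 = (i+1)+d by omega, pow_add]; ring
  have h3 : ∀ i : ℕ, a * -(b*q*q^i) = b * -(a*q^(i+1)) := fun i => by
    rw [pow_succ]; ring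
  rw [Finset.prod_congr rfl fun i (_ : i ∈ Finset.range d) => h1 i,
    Finset.prod_congr rfl fun i (_ : i ∈ Finset.range j) => h2 i,
    Finset.prod_mul_distrib, Finset.prod_mul_distrib, Finset.prod_const, Finset.prod_const,
    Finset.card_range, Finset.card_range]
  have h4 : a^j * (∏ i ∈ Finset.range j, -(b*q*q^i)) = b^j * ∏ i ∈ Finset.range j, -(a*q^(i+1)) := by
    have h5 := Finset.prod_congr rfl fun i (_ : i ∈ Finset.range j) => h3 i
    rw [Finset.prod_mul_distrib, Finset.prod_mul_distrib, Finset.prod_const, Finset.prod_const,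
      Finset.card_range] at h5
    exact h5
  calc a^j * (∏ i ∈ Finset.range j, -(b*q*q^i)) * ((∏ i ∈ Finset.range d, -(a*q^(i+1))) * (q^j)^d)
      = (b^j * ∏ i ∈ Finset.range j, -(a*q^(i+1))) * ((∏ i ∈ Finset.range d, -(a*q^(i+1))) * (q^j)^d) := by
        rw [h4]
    _ = b^j * ((∏ i ∈ Finset.range d, -(a*q^(i+1))) * ((∏ i ∈ Finset.range j, -(a*q^(i+1))) * (q^d)^j)) := by
        rw [← pow_mul, ← pow_mul, Nat.mul_comm j d]; ring

noncomputable def bigqLaguerre (n : ℕ) (lam a b q : ℝ) : ℝ :=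
  ∑ k ∈ Finset.range (n + 1),
    (qPoch (q ^ (-(n : ℤ))) q k * qPoch lam q k * q ^ k) /
      (qPoch (a * q) q k * qPoch (b * q) q k * qPoch q q k)

noncomputable def qMeixner (n : ℕ) (x b c q : ℝ) : ℝ :=
  ∑ k ∈ Finset.range (n + 1),
    (qPoch (q ^ (-(n : ℤ))) q k * qPoch x q k * (-q ^ (n + 1) / c) ^ k) /
      (qPoch (b * q) q k * qPoch q q k)

noncomputable def sdef (q a b : ℝ) (m n : ℕ) (k : ℕ) : ℝ :=
  (∏ i ∈ Finset.range m, (-(a*q^(i+1)))) * qPoch (q^(-(m:ℤ))) q k *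
      (∏ i ∈ Finset.range k, (q^n - q^i)) * q^k * (b/a)^k /
    (qPoch (b*q) q k * qPoch q q k)

noncomputable def Fkj (q a b : ℝ) (m n : ℕ) (k j : ℕ) : ℝ :=
  qPoch (q^(-(m:ℤ))) q k * q^k * qPoch (a*q*q^k) q (m-k) * G q k j *
      (∏ i ∈ Finset.range j, -(b*q*q^i)) * qPoch (b*q*q^j) q (k-j) *
      (∏ i ∈ Finset.range j, (q^n - q^i)) /
    (qPoch (b*q) q k * qPoch q q k)

lemma stepR (q a b : ℝ) (hq0 : 0 < q) (ha0 : 0 < a) (hb : b < 0) (m n : ℕ) :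
    (∏ i ∈ Finset.range m, (-(a*q^(i+1)))) * qMeixner n (q^(-(m:ℤ))) b (-a/b) q
    = ∑ k ∈ Finset.range (n+1), sdef q a b m n k := by
  rw [qMeixner, Finset.mul_sum]
  refine Finset.sum_congr rfl fun k hk => ?_
  have hc : (-q^(n+1) / (-a/b) : ℝ) = b/a * q * q^n := by
    field_simp
    ring
  rw [hc, sdef, mul_pow, mul_pow]
  have hC2 := C2 q hq0.ne' n k
  set W := ∏ i ∈ Finset.range m, (-(a*q^(i+1)))
  set D := qPoch (b*q) q k * qPoch q q k
  linear_combination (W * qPoch (q^(-(m:ℤ))) q k * q^k * (b/a)^k / D) * hC2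

lemma sdef_vanish (q a b : ℝ) (hq0 : 0 < q) (m n : ℕ) (k : ℕ) (h : n < k ∨ m < k) :
    sdef q a b m n k = 0 := by
  rcases h with h | h
  · rw [sdef, Finset.prod_eq_zero (Finset.mem_range.mpr h) (sub_self (q^n))]
    simp
  · rw [sdef, qPoch]
    rw [Finset.prod_eq_zero (Finset.mem_range.mpr h)
      (show 1 - q^(-(m:ℤ)) * q^m = 0 by
        rw [zpow_neg, zpow_natCast, inv_mul_cancel₀ (pow_ne_zero _ hq0.ne')]; ring)]
    simp

lemma stepExt (q a b : ℝ) (hq0 : 0 < q) (m n : ℕ) :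
    ∑ k ∈ Finset.range (n+1), sdef q a b m n k = ∑ k ∈ Finset.range (m+1), sdef q a b m n k := by
  rcases le_total n m with h | h
  · exact Finset.sum_subset (Finset.range_subset_range.mpr (by omega)) fun x hx hnx =>
      sdef_vanish q a b hq0 m n x (Or.inl (by simp at hnx; omega))
  · exact (Finset.sum_subset (Finset.range_subset_range.mpr (by omega)) fun x hx hnx =>
      sdef_vanish q a b hq0 m n x (Or.inr (by simp at hnx; omega))).symm

lemma stepL (q a b : ℝ) (hq0 : 0 < q) (hq1 : q < 1) (haq1 : a*q < 1) (hb : b < 0) (m n : ℕ) :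
    qPoch (a*q) q m * bigqLaguerre m (b*q^(n+1)) a b q
    = ∑ k ∈ Finset.range (m+1), ∑ j ∈ Finset.range (k+1), Fkj q a b m n k j := by
  rw [bigqLaguerre, Finset.mul_sum]
  refine Finset.sum_congr rfl fun k hk => ?_
  have him : k ≤ m := by simpa using Nat.lt_succ_iff.mp (Finset.mem_range.mp hk)
  have haqk : qPoch (a*q) q k ≠ 0 := (qPoch_pos hq0 hq1 haq1 k).ne'
  rw [qPoch_split (a*q) q him,
    show b*q^(n+1) = b*q*q^n by rw [pow_succ']; ring,
    keyK q (q^n) k (b*q)]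
  rw [Finset.mul_sum, Finset.sum_mul, Finset.sum_div, Finset.mul_sum]
  refine Finset.sum_congr rfl fun j hj => ?_
  have hQb : qPoch (b*q) q k ≠ 0 := (qPoch_pos hq0 hq1 (by nlinarith) k).ne'
  have hQq : qPoch q q k ≠ 0 := (qPoch_pos hq0 hq1 hq1 k).ne'
  rw [Fkj, ← mul_div_assoc,
    div_eq_div_iff (mul_ne_zero (mul_ne_zero haqk hQb) hQq) (mul_ne_zero hQb hQq)]
  ring

lemma stepSwap (q a b : ℝ) (m n : ℕ) :
    ∑ k ∈ Finset.range (m+1), ∑ j ∈ Finset.range (k+1), Fkj q a b m n k j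
    = ∑ j ∈ Finset.range (m+1), ∑ i ∈ Finset.range ((m-j)+1), Fkj q a b m n (j+i) j := by
  have h1 : ∀ k ∈ Finset.range (m+1), ∑ j ∈ Finset.range (k+1), Fkj q a b m n k j
      = ∑ j ∈ Finset.range (m+1), Fkj q a b m n k j := by
    intro k hk
    have hkm : k ≤ m := by simpa using Nat.lt_succ_iff.mp (Finset.mem_range.mp hk)
    refine Finset.sum_subset (Finset.range_subset_range.mpr (by omega)) fun x hx hnx => ?_
    have hkx : k < x := by simp only [Finset.mem_range] at hnx; omega
    simp [Fkj, G_zero q k x hkx]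
  rw [Finset.sum_congr rfl h1, Finset.sum_comm]
  refine Finset.sum_congr rfl fun j hj => ?_
  have hjm : j ≤ m := by simpa using Nat.lt_succ_iff.mp (Finset.mem_range.mp hj)
  have h2 : ∑ k ∈ Finset.range (m+1), Fkj q a b m n k j
      = ∑ k ∈ Finset.Ico j (m+1), Fkj q a b m n k j := by
    refine (Finset.sum_subset (fun x hx => Finset.mem_range.mpr (Finset.mem_Ico.mp hx).2)
      fun x hx hnx => ?_).symm
    have hxj : x < j := by
      simp only [Finset.mem_range] at hx
      simp only [Finset.mem_Ico, not_and, not_lt] at hnx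
      omega
    simp [Fkj, G_zero q x j hxj]
  rw [h2, Finset.sum_Ico_eq_sum_range, show m+1-j = (m-j)+1 by omega]

lemma stepInner (q a b : ℝ) (hq0 : 0 < q) (hq1 : q < 1) (ha0 : 0 < a) (hb : b < 0)
    (m n : ℕ) {j : ℕ} (hjm : j ≤ m) :
    ∑ i ∈ Finset.range ((m-j)+1), Fkj q a b m n (j+i) j = sdef q a b m n j := by
  have hqq : ∀ r, qPoch q q r ≠ 0 := fun r => (qPoch_pos hq0 hq1 hq1 r).ne'
  have hbq : ∀ r, qPoch (b*q) q r ≠ 0 := fun r => (qPoch_pos hq0 hq1 (by nlinarith) r).ne'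
  have hbqj : ∀ r, qPoch (b*q*q^j) q r ≠ 0 := fun r =>
    (qPoch_pos hq0 hq1 (lt_trans
      (mul_neg_of_neg_of_pos (mul_neg_of_neg_of_pos hb hq0) (pow_pos hq0 j)) one_pos) r).ne'
  set Cj : ℝ := qPoch (q^(-(m:ℤ))) q j * q^j * (∏ i ∈ Finset.range j, -(b*q*q^i)) *
      (∏ i ∈ Finset.range j, (q^n - q^i)) / (qPoch (b*q) q j * qPoch q q j) with hCj
  have per : ∀ i ∈ Finset.range ((m-j)+1), Fkj q a b m n (j+i) j
      = Cj * (qPoch (q^(-((m-j:ℕ):ℤ))) q i * q^i * qPoch ((a*q^j)*q^(i+1)) q ((m-j)-i)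
          / qPoch q q i) := by
    intro i hi
    have him : i ≤ m - j := by simpa using Nat.lt_succ_iff.mp (Finset.mem_range.mp hi)
    have harg : (q^(-(m:ℤ)) * q^j : ℝ) = q^(-((m-j:ℕ):ℤ)) := by
      rw [← zpow_natCast q j, ← zpow_add₀ hq0.ne']
      congr 1
      push_cast
      omega
    have r1 : qPoch (q^(-(m:ℤ))) q (j+i)
        = qPoch (q^(-(m:ℤ))) q j * qPoch (q^(-((m-j:ℕ):ℤ))) q i := by
      rw [qPoch_add, harg]
    have r3 : qPoch (a*q*q^(j+i)) q (m-(j+i))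
        = qPoch ((a*q^j)*q^(i+1)) q ((m-j)-i) := by
      rw [show a*q*q^(j+i) = (a*q^j)*q^(i+1) by rw [pow_add, pow_succ']; ring,
        show m-(j+i) = (m-j)-i by omega]
    have r4 : qPoch (b*q) q (j+i) = qPoch (b*q) q j * qPoch (b*q*q^j) q i := qPoch_add _ _ _ _
    have hGm := G_mul q (j+i) j i rfl
    rw [Fkj, hCj, r1, r3, r4, pow_add q j i, Nat.add_sub_cancel_left,
      div_mul_div_comm, div_eq_div_iff
        (mul_ne_zero (mul_ne_zero (hbq j) (hbqj i)) (hqq (j+i)))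
        (mul_ne_zero (mul_ne_zero (hbq j) (hqq j)) (hqq i))]
    linear_combination (qPoch (q^(-(m:ℤ))) q j * qPoch (q^(-((m-j:ℕ):ℤ))) q i *
      (q^j * q^i) * qPoch ((a*q^j)*q^(i+1)) q ((m-j)-i) *
      (∏ i ∈ Finset.range j, -(b*q*q^i)) * qPoch (b*q*q^j) q i *
      (∏ i ∈ Finset.range j, (q^n - q^i)) * qPoch (b*q) q j) * hGm
  rw [Finset.sum_congr rfl per, ← Finset.mul_sum, L2p q a hq0 hq1 (m-j) (a*q^j)]
  have haj : (a:ℝ)^j ≠ 0 := pow_ne_zero _ ha0.ne'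
  have hD : qPoch (b*q) q j * qPoch q q j ≠ 0 := mul_ne_zero (hbq j) (hqq j)
  have hPJ := PJ q a b hjm
  rw [sdef, hCj, div_pow, div_mul_eq_mul_div]
  congr 1
  apply mul_right_cancel₀ haj
  have h6 : (b^j/a^j)*a^j = b^j := div_mul_cancel₀ _ haj
  set Pmj := qPoch (q^(-(m:ℤ))) q j with hPmj
  set W := ∏ i ∈ Finset.range m, (-(a*q^(i+1))) with hW
  set pj := ∏ i ∈ Finset.range j, (q^n - q^i) with hpj
  linear_combination (Pmj * pj * q^j) * hPJ - (W * Pmj * pj * q^j) * h6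

lemma hPW (q a : ℝ) (hq0 : 0 < q) (ha0 : 0 < a) (m : ℕ) :
    qPoch (q ^ (-(m:ℤ)) / a) q m * (∏ i ∈ Finset.range m, (-(a*q^(i+1))))
    = qPoch (a*q) q m := by
  have hrefl : (∏ j ∈ Finset.range m, (-(a*q^(m-j)))) = ∏ i ∈ Finset.range m, (-(a*q^(i+1))) := by
    rw [← Finset.prod_range_reflect (fun i => -(a*q^(i+1))) m]
    refine Finset.prod_congr rfl fun j hj => ?_
    have hjm : j < m := Finset.mem_range.mp hj
    rw [show m-1-j+1 = m-j by omega]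
  have hfac : ∀ j ∈ Finset.range m,
      (1 - q^(-(m:ℤ))/a*q^j) * (-(a*q^(m-j))) = 1 - a*q^(m-j) := by
    intro j hj
    have hjm : j < m := Finset.mem_range.mp hj
    have h1 : (q^j * q^(m-j) : ℝ) = q^m := by rw [← pow_add, show j+(m-j) = m by omega]
    have h2 : (q^(-(m:ℤ)) * q^m : ℝ) = 1 := by
      rw [zpow_neg, zpow_natCast]; exact inv_mul_cancel₀ (pow_ne_zero _ hq0.ne')
    have h3 : a * a⁻¹ = 1 := mul_inv_cancel₀ ha0.ne'
    have hone : q^(-(m:ℤ)) * (q^j*q^(m-j)) * (a*a⁻¹) = 1 := by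
      rw [h1, h2, one_mul, h3]
    linear_combination hone
  calc qPoch (q ^ (-(m:ℤ)) / a) q m * (∏ i ∈ Finset.range m, (-(a*q^(i+1))))
      = qPoch (q ^ (-(m:ℤ)) / a) q m * ∏ j ∈ Finset.range m, (-(a*q^(m-j))) := by rw [hrefl]
    _ = ∏ j ∈ Finset.range m, ((1 - q^(-(m:ℤ))/a*q^j) * (-(a*q^(m-j)))) := by
        rw [qPoch, ← Finset.prod_mul_distrib]
    _ = ∏ j ∈ Finset.range m, (1 - a*q^(m-j)) := Finset.prod_congr rfl hfac
    _ = ∏ j ∈ Finset.range m, (1 - a*q^(j+1)) := by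
        rw [← Finset.prod_range_reflect (fun j => 1 - a*q^(j+1)) m]
        refine Finset.prod_congr rfl fun j hj => ?_
        have hjm : j < m := Finset.mem_range.mp hj
        rw [show m-1-j+1 = m-j by omega]
    _ = qPoch (a*q) q m := by
        rw [qPoch]
        exact Finset.prod_congr rfl fun j _ => by rw [pow_succ']; ring

theorem bigqLaguerre_eq_qMeixner_second (q a b : ℝ) (hq0 : 0 < q) (hq1 : q < 1)
    (ha0 : 0 < a) (ha1 : a < q⁻¹) (hb : b < 0) (m n : ℕ) :
    bigqLaguerre m (b * q ^ (n + 1)) a b q =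
      (qPoch (q ^ (-(m : ℤ)) / a) q m)⁻¹ * qMeixner n (q ^ (-(m : ℤ))) b (-a / b) q := by
  have haq1 : a * q < 1 := by
    have h := mul_lt_mul_of_pos_right ha1 hq0
    rwa [inv_mul_cancel₀ hq0.ne'] at h
  have hWne : (∏ i ∈ Finset.range m, (-(a*q^(i+1)))) ≠ 0 :=
    Finset.prod_ne_zero_iff.mpr fun i _ =>
      neg_ne_zero.mpr (mul_pos ha0 (pow_pos hq0 (i+1))).ne'
  have hPWm := hPW q a hq0 ha0 m
  have key : qPoch (a*q) q m * bigqLaguerre m (b*q^(n+1)) a b q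
      = (∏ i ∈ Finset.range m, (-(a*q^(i+1)))) * qMeixner n (q^(-(m:ℤ))) b (-a/b) q := by
    rw [stepL q a b hq0 hq1 haq1 hb m n, stepSwap, stepR q a b hq0 ha0 hb m n,
      stepExt q a b hq0 m n]
    exact Finset.sum_congr rfl fun j hj =>
      stepInner q a b hq0 hq1 ha0 hb m n
        (by simpa using Nat.lt_succ_iff.mp (Finset.mem_range.mp hj))
  have hPne : qPoch (q ^ (-(m:ℤ))/a) q m ≠ 0 := fun h => by
    rw [h, zero_mul] at hPWm
    exact (qPoch_pos hq0 hq1 haq1 m).ne' hPWm.symm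
  have h2 : qPoch (q ^ (-(m:ℤ))/a) q m * bigqLaguerre m (b*q^(n+1)) a b q
      = qMeixner n (q^(-(m:ℤ))) b (-a/b) q := by
    apply mul_left_cancel₀ hWne
    calc (∏ i ∈ Finset.range m, (-(a*q^(i+1)))) *
          (qPoch (q ^ (-(m:ℤ))/a) q m * bigqLaguerre m (b*q^(n+1)) a b q)
        = (qPoch (q ^ (-(m:ℤ))/a) q m * (∏ i ∈ Finset.range m, (-(a*q^(i+1))))) *
            bigqLaguerre m (b*q^(n+1)) a b q := by ring
      _ = qPoch (a*q) q m * bigqLaguerre m (b*q^(n+1)) a b q := by rw [hPWm]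
      _ = (∏ i ∈ Finset.range m, (-(a*q^(i+1)))) * qMeixner n (q^(-(m:ℤ))) b (-a/b) q := key
  rw [← h2, ← mul_assoc, inv_mul_cancel₀ hPne, one_mul]
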